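/- Suppose the linear system ξ̇(t,P) = Σ_{i=0}^{l} Aᵢ(P) ξ(t−τᵢ,P) + Σ_{j=0}^{r} Bⱼ(P) ν(t−νⱼ), ξ ≡ 0 on [−τ_m, 0], output η = Cξ, is globally identifiable at P: there exists an input ν̄ ∈ L²(0,T;ℝᵏ), ν̄ ≠ 0, such that for every P̃ ≠ P in 𝒰_P, ‖η(·,P) − η(·,P̃)‖_{L²(0,T)} > 0. Assume further: (a) for each P̃ ∈ 𝒰_P and each ε > 0, the nonlinear system (5) with input ū + (ε/‖ν̄‖)ν̄ has a solution whose deviation from the linearized solution satisfies ‖x_δ(·,P̃) − ξ(·,P̃)‖_{L²} ≤ L₈ ε² with L₈ independent of ε and P̃; and (b) the equilibrium outputs satisfy y_e(P) = y_e(P̃). Then for ε > 0 sufficiently small, the nonlinear outputs satisfy y(·,P) ≠ y(·,P̃) in L²(0,T;ℝᵐ), where the outputs are y = Cx. -/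

import Mathlib

open MeasureTheory

/-! At the identifying input of size `ε`, the linearized outputs at `P` and `P̃` are `εK` apart,
with `K = ‖η̄(P) - η̄(P̃)‖ / ‖ν̄‖ > 0`, while each nonlinear output (shifted by the common
equilibrium output) lies within `‖C‖ L₈ ε²` of the corresponding linearized one. Once
`2 ‖C‖ L₈ ε² < εK` the two closed balls of radius `‖C‖ L₈ ε²` are disjoint, so the nonlinear
outputs differ. -/

theorem ContinuousLinearMap.dist_compLp_le {α 𝕜 E F : Type*} [MeasurableSpace α]
    {μ : Measure α} {p : ENNReal} [Fact (1 ≤ p)] [NontriviallyNormedField 𝕜]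
    [NormedAddCommGroup E] [NormedAddCommGroup F] [NormedSpace 𝕜 E] [NormedSpace 𝕜 F]
    (C : E →L[𝕜] F) (f g : Lp E p μ) :
    dist (C.compLp f) (C.compLp g) ≤ ‖C‖ * dist f g := by
  rw [dist_eq_norm, dist_eq_norm, ← coe_nnnorm]
  exact C.lipschitz.norm_compLp_sub_le (map_zero C) f g

theorem exists_pos_forall_mul_sq_lt_mul {K M : ℝ} (hK : 0 < K) (hM : 0 ≤ M) :
    ∃ ε₀ > 0, ∀ ε : ℝ, 0 < ε → ε < ε₀ → M * ε ^ 2 < K * ε := by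
  refine ⟨K / (M + 1), by positivity, fun ε hε hεε₀ => ?_⟩
  have hMε : M * ε < K := by
    have := (lt_div_iff₀ (by positivity : (0 : ℝ) < M + 1)).1 hεε₀
    nlinarith
  calc M * ε ^ 2 = (M * ε) * ε := by ring
    _ < K * ε := mul_lt_mul_of_pos_right hMε hε

theorem nonlinear_identifiable_of_linearized_identifiable_general
    (n m : ℕ) (T : ℝ)
    (Param : Type) (U : Set Param) (P : Param) (hP : P ∈ U)
    -- operator `C` (output map) and its induced map on `L²(0,T)`
    (C : EuclideanSpace ℝ (Fin n) →L[ℝ] EuclideanSpace ℝ (Fin m))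
    -- norm of the identifying input `ν̄` of the linearized system
    (νnorm : ℝ) (hνnorm : 0 < νnorm)
    -- outputs `η̄(·,P')` of the linearized system under the input `ν̄`
    (ηbar : Param → Lp (EuclideanSpace ℝ (Fin m)) 2
      (volume.restrict (Set.Ioc (0 : ℝ) T)))
    -- identifiability of the linearized system at `P` under `ν̄`
    (hid : ∀ P' ∈ U, P' ≠ P → 0 < ‖ηbar P - ηbar P'‖)
    -- states: `xδ ε P'` is the deviation of the nonlinear state from
    -- equilibrium and `ξ ε P'` the linearized state, both for the input
    -- `ū + (ε/‖ν̄‖)ν̄`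
    (xδ ξ : ℝ → Param → Lp (EuclideanSpace ℝ (Fin n)) 2
      (volume.restrict (Set.Ioc (0 : ℝ) T)))
    -- linear scaling of the linearized output
    (hscale : ∀ ε : ℝ, 0 < ε → ∀ P' ∈ U,
      C.compLp (ξ ε P') = (ε / νnorm) • ηbar P')
    -- (a) quadratic deviation bound, uniform in `ε` and `P'`
    (ha : ∃ L8 : ℝ, 0 ≤ L8 ∧ ∀ ε : ℝ, 0 < ε → ∀ P' ∈ U,
      ‖xδ ε P' - ξ ε P'‖ ≤ L8 * ε ^ 2)
    -- equilibrium outputs `y_e(P')` and the nonlinear outputs `y ε P'`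
    (ye : Param → Lp (EuclideanSpace ℝ (Fin m)) 2
      (volume.restrict (Set.Ioc (0 : ℝ) T)))
    (y : ℝ → Param → Lp (EuclideanSpace ℝ (Fin m)) 2
      (volume.restrict (Set.Ioc (0 : ℝ) T)))
    (hy : ∀ ε : ℝ, 0 < ε → ∀ P' ∈ U,
      y ε P' = ye P' + C.compLp (xδ ε P'))
    (Ptil : Param) (hPtil : Ptil ∈ U) (hne : Ptil ≠ P)
    -- (b) equal equilibrium outputs
    (hb : ye P = ye Ptil) :
    ∃ ε₀ : ℝ, 0 < ε₀ ∧ ∀ ε : ℝ, 0 < ε → ε < ε₀ → y ε P ≠ y ε Ptil := by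
  obtain ⟨L8, hL8, hdev⟩ := ha
  obtain ⟨ε₀, hε₀, hsmall⟩ := exists_pos_forall_mul_sq_lt_mul
    (div_pos (hid Ptil hPtil hne) hνnorm) (by positivity : 0 ≤ 2 * (‖C‖ * L8))
  refine ⟨ε₀, hε₀, fun ε hε hεε₀ => ?_⟩
  have hnear : ∀ P' ∈ U,
      dist (y ε P') (ye P' + C.compLp (ξ ε P')) ≤ ‖C‖ * (L8 * ε ^ 2) := fun P' hP' => by
    rw [hy ε hε P' hP', dist_add_left]
    exact (C.dist_compLp_le _ _).trans
      (mul_le_mul_of_nonneg_left (dist_eq_norm (xδ ε P') _ ▸ hdev ε hε P' hP') (norm_nonneg C))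
  have hfar : dist (ye P + C.compLp (ξ ε P)) (ye Ptil + C.compLp (ξ ε Ptil))
      = ‖ηbar P - ηbar Ptil‖ / νnorm * ε := by
    rw [← hb, dist_add_left, hscale ε hε P hP, hscale ε hε Ptil hPtil, dist_smul₀, dist_eq_norm,
      Real.norm_of_nonneg (by positivity)]
    ring
  have hsep := hsmall ε hε hεε₀
  exact (Metric.closedBall_disjoint_closedBall (by linarith)).ne_of_mem
    (Metric.mem_closedBall.2 (hnear P hP)) (Metric.mem_closedBall.2 (hnear Ptil hPtil))

/-- core implication of Proposition 3.1 (Grewal–Glover extended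
to delay systems).  If the linearized system is identifiable at `P` via an
input `ν̄`, the linearized output scales linearly with the input size, the
deviation between the nonlinear and linearized states is quadratic in `ε`
(uniformly in the parameter), and the equilibrium outputs coincide, then for
`ε` small enough the nonlinear outputs at `P` and `P̃` are distinct in `L²`. -/
theorem nonlinear_identifiable_of_linearized_identifiable
    (n m : ℕ) (T : ℝ) (hT : 0 < T)
    (Param : Type) (U : Set Param) (P : Param) (hP : P ∈ U)
    -- operator `C` (output map) and its induced map on `L²(0,T)`
    (C : EuclideanSpace ℝ (Fin n) →L[ℝ] EuclideanSpace ℝ (Fin m))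
    -- norm of the identifying input `ν̄` of the linearized system
    (νnorm : ℝ) (hνnorm : 0 < νnorm)
    -- outputs `η̄(·,P')` of the linearized system under the input `ν̄`
    (ηbar : Param → Lp (EuclideanSpace ℝ (Fin m)) 2
      (volume.restrict (Set.Ioc (0 : ℝ) T)))
    -- identifiability of the linearized system at `P` under `ν̄`
    (hid : ∀ P' ∈ U, P' ≠ P → 0 < ‖ηbar P - ηbar P'‖)
    -- states: `xδ ε P'` is the deviation of the nonlinear state from
    -- equilibrium and `ξ ε P'` the linearized state, both for the input
    -- `ū + (ε/‖ν̄‖)ν̄`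
    (xδ ξ : ℝ → Param → Lp (EuclideanSpace ℝ (Fin n)) 2
      (volume.restrict (Set.Ioc (0 : ℝ) T)))
    -- linear scaling of the linearized output
    (hscale : ∀ ε : ℝ, 0 < ε → ∀ P' ∈ U,
      C.compLp (ξ ε P') = (ε / νnorm) • ηbar P')
    -- (a) quadratic deviation bound, uniform in `ε` and `P'`
    (ha : ∃ L8 : ℝ, 0 ≤ L8 ∧ ∀ ε : ℝ, 0 < ε → ∀ P' ∈ U,
      ‖xδ ε P' - ξ ε P'‖ ≤ L8 * ε ^ 2)
    -- equilibrium outputs `y_e(P')` and the nonlinear outputs `y ε P'`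
    (ye : Param → Lp (EuclideanSpace ℝ (Fin m)) 2
      (volume.restrict (Set.Ioc (0 : ℝ) T)))
    (y : ℝ → Param → Lp (EuclideanSpace ℝ (Fin m)) 2
      (volume.restrict (Set.Ioc (0 : ℝ) T)))
    (hy : ∀ ε : ℝ, 0 < ε → ∀ P' ∈ U,
      y ε P' = ye P' + C.compLp (xδ ε P'))
    (Ptil : Param) (hPtil : Ptil ∈ U) (hne : Ptil ≠ P)
    -- (b) equal equilibrium outputs
    (hb : ye P = ye Ptil) :
    ∃ ε₀ : ℝ, 0 < ε₀ ∧ ∀ ε : ℝ, 0 < ε → ε < ε₀ → y ε P ≠ y ε Ptil :=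
  nonlinear_identifiable_of_linearized_identifiable_general n m T Param U P hP C νnorm hνnorm ηbar
    hid xδ ξ hscale ha ye y hy Ptil hPtil hne hb
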